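/- arXiv:1606.06625 — 3 statements merged into one kernel-verified Lean document; each statement's English description precedes it below -/
import Mathlib

section
/- Let X ∈ ℝ^{n×m} with compact SVD X = U Σ Vᵀ (U ∈ ℝ^{n×s} with orthonormal columns, Σ invertible diagonal), Y ∈ ℝ^{n×m}, A = Y X⁺, and Ã = Uᵀ Y V Σ⁻¹. If Ã w = λ w with λ ≠ 0 and w ≠ 0, then φ := λ⁻¹ Y V Σ⁻¹ w is an eigenvector of A with eigenvalue λ, i.e., A φ = λ φ. -/
open Matrix

/-- The four Moore–Penrose conditions. -/
def IsMoorePenrose {m n : Type*} [Fintype m] [Fintype n]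
    (M : Matrix m n ℝ) (P : Matrix n m ℝ) : Prop :=
  M * P * M = M ∧ P * M * P = P ∧ (M * P)ᵀ = M * P ∧ (P * M)ᵀ = P * M

lemma mp_unique {m n : Type*} [Fintype m] [Fintype n]
    (M : Matrix m n ℝ) (P Q : Matrix n m ℝ)
    (hP : IsMoorePenrose M P) (hQ : IsMoorePenrose M Q) : P = Q := by
  obtain ⟨h1, h2, h3, h4⟩ := hP
  obtain ⟨g1, g2, g3, g4⟩ := hQ
  have hMt1 : Mᵀ = Mᵀ * M * Q := by
    conv_lhs => rw [← g1]
    rw [transpose_mul, g3, Matrix.mul_assoc]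
  have hMt2 : Mᵀ = Q * M * Mᵀ := by
    conv_lhs => rw [← g1, Matrix.mul_assoc]
    rw [transpose_mul, g4]
  have hMP : M * P = M * Q := by
    calc M * P = (M * P)ᵀ := h3.symm
    _ = Pᵀ * Mᵀ := transpose_mul _ _
    _ = Pᵀ * (Mᵀ * M * Q) := by rw [← hMt1]
    _ = (Pᵀ * Mᵀ) * (M * Q) := by simp only [Matrix.mul_assoc]
    _ = (M * P) * (M * Q) := by rw [← transpose_mul, h3]
    _ = (M * P * M) * Q := by simp only [Matrix.mul_assoc]
    _ = M * Q := by rw [h1]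
  have hPM : P * M = Q * M := by
    calc P * M = (P * M)ᵀ := h4.symm
    _ = Mᵀ * Pᵀ := transpose_mul _ _
    _ = (Q * M * Mᵀ) * Pᵀ := by rw [← hMt2]
    _ = (Q * M) * (Mᵀ * Pᵀ) := by simp only [Matrix.mul_assoc]
    _ = (Q * M) * (P * M) := by rw [← transpose_mul, h4]
    _ = Q * (M * P * M) := by simp only [Matrix.mul_assoc]
    _ = Q * M := by rw [h1]
  calc P = P * M * P := h2.symm
  _ = P * (M * Q) := by rw [Matrix.mul_assoc, hMP]
  _ = (P * M) * Q := by rw [Matrix.mul_assoc]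
  _ = Q * M * Q := by rw [hPM]
  _ = Q := g2

/-- Correctness of the exact DMD algorithm: `φ = λ⁻¹ Y V Σ⁻¹ w` is an
eigenvector of `A = Y X⁺` with eigenvalue `λ`. -/
theorem exact_dmd_mode_is_eigenvector {n m s : ℕ}
    (X Y : Matrix (Fin n) (Fin m) ℝ)
    (U : Matrix (Fin n) (Fin s) ℝ) (V : Matrix (Fin m) (Fin s) ℝ)
    (σ : Fin s → ℝ)
    (hU : Uᵀ * U = 1) (hV : Vᵀ * V = 1) (hσ : ∀ i, σ i ≠ 0)
    (hX : X = U * Matrix.diagonal σ * Vᵀ)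
    (P : Matrix (Fin m) (Fin n) ℝ) (hP : IsMoorePenrose X P)
    (A : Matrix (Fin n) (Fin n) ℝ) (hA : A = Y * P)
    (Atil : Matrix (Fin s) (Fin s) ℝ)
    (hAtil : Atil = Uᵀ * Y * V * Matrix.diagonal (fun i => (σ i)⁻¹))
    (lam : ℝ) (w : Fin s → ℝ) (hlam : lam ≠ 0) (hw : w ≠ 0)
    (heig : Atil.mulVec w = lam • w)
    (φ : Fin n → ℝ)
    (hφ : φ = lam⁻¹ • (Y * V * Matrix.diagonal (fun i => (σ i)⁻¹)).mulVec w) :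
    A.mulVec φ = lam • φ := by
  set D := Matrix.diagonal σ with hD
  set Di := Matrix.diagonal (fun i => (σ i)⁻¹) with hDi
  have hDDi : D * Di = 1 := by
    rw [hD, hDi, diagonal_mul_diagonal]
    simp only [mul_inv_cancel₀ (hσ _)]
    exact diagonal_one
  have hDiD : Di * D = 1 := by
    rw [hD, hDi, diagonal_mul_diagonal]
    simp only [inv_mul_cancel₀ (hσ _)]
    exact diagonal_one
  -- The explicit pseudoinverse
  set Q := V * Di * Uᵀ with hQ
  have hXQ : X * Q = U * Uᵀ := by
    rw [hX, hQ]
    calc U * D * Vᵀ * (V * Di * Uᵀ) = U * D * (Vᵀ * V) * (Di * Uᵀ) := by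
          simp only [Matrix.mul_assoc]
    _ = U * (D * Di) * Uᵀ := by rw [hV]; simp only [Matrix.mul_one, Matrix.mul_assoc]
    _ = U * Uᵀ := by rw [hDDi, Matrix.mul_one]
  have hQX : Q * X = V * Vᵀ := by
    rw [hX, hQ]
    calc V * Di * Uᵀ * (U * D * Vᵀ) = V * Di * (Uᵀ * U) * (D * Vᵀ) := by
          simp only [Matrix.mul_assoc]
    _ = V * (Di * D) * Vᵀ := by rw [hU]; simp only [Matrix.mul_one, Matrix.mul_assoc]
    _ = V * Vᵀ := by rw [hDiD, Matrix.mul_one]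
  have hQmp : IsMoorePenrose X Q := by
    refine ⟨?_, ?_, ?_, ?_⟩
    · rw [hXQ, hX]
      calc U * Uᵀ * (U * D * Vᵀ) = U * (Uᵀ * U) * (D * Vᵀ) := by
            simp only [Matrix.mul_assoc]
      _ = U * D * Vᵀ := by rw [hU, Matrix.mul_one, Matrix.mul_assoc]
    · rw [Matrix.mul_assoc, hXQ]
      conv_lhs => rw [hQ]
      calc V * Di * Uᵀ * (U * Uᵀ) = V * Di * (Uᵀ * U) * Uᵀ := by
            simp only [Matrix.mul_assoc]
      _ = V * Di * Uᵀ := by rw [hU, Matrix.mul_one]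
      _ = Q := hQ.symm
    · rw [hXQ, transpose_mul, transpose_transpose]
    · rw [hQX, transpose_mul, transpose_transpose]
  have hPQ : P = Q := mp_unique X P Q hP hQmp
  -- Key matrix identity: Q * (Y * V * Di) = V * Di * Atil
  have hkey : Q * (Y * V * Di) = V * Di * Atil := by
    rw [hQ, hAtil]
    simp only [Matrix.mul_assoc]
  subst hA hφ hPQ
  rw [Matrix.mulVec_smul]
  have h2 : (Y * Q) * (Y * V * Di) = (Y * V * Di) * Atil := by
    rw [Matrix.mul_assoc, hkey, ← Matrix.mul_assoc, ← Matrix.mul_assoc]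
  rw [Matrix.mulVec_mulVec, h2, ← Matrix.mulVec_mulVec, heig, Matrix.mulVec_smul,
      smul_smul, smul_smul, inv_mul_cancel₀ hlam, mul_inv_cancel₀ hlam]
end

section
/- Let X ∈ ℝ^{n×m} with compact SVD X = U Σ Vᵀ, Y ∈ ℝ^{n×m}, A = Y X⁺, and Ã = Uᵀ Y V Σ⁻¹. If A φ = λ φ with λ ≠ 0 and φ in the column space of U (i.e., φ = U Uᵀ φ), then w := Uᵀ φ satisfies à w = λ w. -/
open Matrix

/-- If `A φ = λ φ` with `λ ≠ 0` and `φ` in the column space of `U`,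
then `w = Uᵀ φ` satisfies `Ã w = λ w`. -/
theorem dmd_eigenvector_projects {n m s : ℕ}
    (X Y : Matrix (Fin n) (Fin m) ℝ)
    (U : Matrix (Fin n) (Fin s) ℝ) (V : Matrix (Fin m) (Fin s) ℝ)
    (σ : Fin s → ℝ)
    (hU : Uᵀ * U = 1) (hV : Vᵀ * V = 1) (hσ : ∀ i, σ i ≠ 0)
    (hX : X = U * Matrix.diagonal σ * Vᵀ)
    (P : Matrix (Fin m) (Fin n) ℝ) (hP : IsMoorePenrose X P)
    (A : Matrix (Fin n) (Fin n) ℝ) (hA : A = Y * P)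
    (Atil : Matrix (Fin s) (Fin s) ℝ)
    (hAtil : Atil = Uᵀ * Y * V * Matrix.diagonal (fun i => (σ i)⁻¹))
    (lam : ℝ) (φ : Fin n → ℝ) (hlam : lam ≠ 0)
    (heig : A.mulVec φ = lam • φ)
    (hrange : φ = (U * Uᵀ).mulVec φ) :
    Atil.mulVec (Uᵀ.mulVec φ) = lam • Uᵀ.mulVec φ := by
  set Sg := Matrix.diagonal (fun i => (σ i)⁻¹) with hSg
  set Q : Matrix (Fin m) (Fin n) ℝ := V * Sg * Uᵀ with hQdef
  have hdd : Matrix.diagonal σ * Sg = 1 := by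
    rw [hSg, Matrix.diagonal_mul_diagonal]
    simp [mul_inv_cancel₀ (hσ _)]
  have hdd' : Sg * Matrix.diagonal σ = 1 := by
    rw [hSg, Matrix.diagonal_mul_diagonal]
    simp [inv_mul_cancel₀ (hσ _)]
  have hXQ : X * Q = U * Uᵀ := by
    rw [hX, hQdef]
    calc U * Matrix.diagonal σ * Vᵀ * (V * Sg * Uᵀ)
        = U * Matrix.diagonal σ * (Vᵀ * V) * Sg * Uᵀ := by
          simp only [Matrix.mul_assoc]
      _ = U * (Matrix.diagonal σ * Sg) * Uᵀ := by
          rw [hV]; simp only [Matrix.mul_one, Matrix.mul_assoc]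
      _ = U * Uᵀ := by rw [hdd, Matrix.mul_one]
  have hQX : Q * X = V * Vᵀ := by
    rw [hX, hQdef]
    calc V * Sg * Uᵀ * (U * Matrix.diagonal σ * Vᵀ)
        = V * Sg * (Uᵀ * U) * Matrix.diagonal σ * Vᵀ := by
          simp only [Matrix.mul_assoc]
      _ = V * (Sg * Matrix.diagonal σ) * Vᵀ := by
          rw [hU]; simp only [Matrix.mul_one, Matrix.mul_assoc]
      _ = V * Vᵀ := by rw [hdd', Matrix.mul_one]
  have hQMP : IsMoorePenrose X Q := by
    refine ⟨?_, ?_, ?_, ?_⟩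
    · rw [hXQ, hX]
      calc U * Uᵀ * (U * Matrix.diagonal σ * Vᵀ)
          = U * (Uᵀ * U) * (Matrix.diagonal σ * Vᵀ) := by
            simp only [Matrix.mul_assoc]
        _ = U * Matrix.diagonal σ * Vᵀ := by
            rw [hU, Matrix.mul_one, Matrix.mul_assoc]
    · rw [Matrix.mul_assoc, hXQ, hQdef]
      calc V * Sg * Uᵀ * (U * Uᵀ)
          = V * Sg * (Uᵀ * U) * Uᵀ := by simp only [Matrix.mul_assoc]
        _ = V * Sg * Uᵀ := by rw [hU, Matrix.mul_one]
    · rw [hXQ]; simp [transpose_mul]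
    · rw [hQX]; simp [transpose_mul]
  have hPQ : P = Q := mp_unique X P Q hP hQMP
  have key : Atil * Uᵀ = Uᵀ * Y * P * (U * Uᵀ) := by
    rw [hAtil, hPQ, hQdef]
    calc Uᵀ * Y * V * Sg * Uᵀ
        = Uᵀ * Y * (V * Sg * (Uᵀ * U) * Uᵀ) := by
          rw [hU, Matrix.mul_one]; simp only [Matrix.mul_assoc]
      _ = Uᵀ * Y * (V * Sg * Uᵀ * (U * Uᵀ)) := by
          simp only [Matrix.mul_assoc]
      _ = Uᵀ * Y * (V * Sg * Uᵀ) * (U * Uᵀ) := by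
          simp only [Matrix.mul_assoc]
  calc Atil.mulVec (Uᵀ.mulVec φ)
      = (Atil * Uᵀ).mulVec φ := by rw [Matrix.mulVec_mulVec]
    _ = (Uᵀ * Y * P * (U * Uᵀ)).mulVec φ := by rw [key]
    _ = (Uᵀ * (Y * P)).mulVec ((U * Uᵀ).mulVec φ) := by
        rw [← Matrix.mulVec_mulVec]; simp only [Matrix.mul_assoc]
    _ = Uᵀ.mulVec (A.mulVec φ) := by
        rw [← hrange, hA, Matrix.mulVec_mulVec]
    _ = lam • Uᵀ.mulVec φ := by rw [heig, Matrix.mulVec_smul]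
end

section
/- If Algorithm TT-SVD is applied exactly (threshold ε = 0), then the resulting cores reconstruct the original tensor: for a tensor x ∈ ℝ^{n₁×n₂×n₃} (d = 3), writing the first unfolding x⟨n₁ | n₂n₃⟩ = U₁ Σ₁ V₁ᵀ (compact SVD) and then the unfolding of Σ₁V₁ᵀ reshaped to (r₁n₂)×n₃ as U₂ Σ₂ V₂ᵀ (compact SVD), the cores obtained from U₁, U₂, and Σ₂V₂ᵀ satisfy x_{i₁,i₂,i₃} = Σ_{k₁,k₂} (U₁)_{i₁,k₁} (U₂)_{(k₁,i₂),k₂} (Σ₂V₂ᵀ)_{k₂,i₃}. -/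
open Matrix

/-- Exact TT-SVD (ε = 0) reconstructs the original tensor, here for `d = 3`. -/
theorem tt_svd_exact_reconstruction {n₁ n₂ n₃ r₁ r₂ : ℕ}
    (x : Fin n₁ → Fin n₂ → Fin n₃ → ℝ)
    (U₁ : Matrix (Fin n₁) (Fin r₁) ℝ)
    (V₁ : Matrix (Fin n₂ × Fin n₃) (Fin r₁) ℝ) (σ₁ : Fin r₁ → ℝ)
    (hU₁ : U₁ᵀ * U₁ = 1) (hV₁ : V₁ᵀ * V₁ = 1) (hσ₁ : ∀ i, σ₁ i ≠ 0)
    (h₁ : ∀ i₁ i₂ i₃,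
      x i₁ i₂ i₃ = (U₁ * Matrix.diagonal σ₁ * V₁ᵀ) i₁ (i₂, i₃))
    (U₂ : Matrix (Fin r₁ × Fin n₂) (Fin r₂) ℝ)
    (V₂ : Matrix (Fin n₃) (Fin r₂) ℝ) (σ₂ : Fin r₂ → ℝ)
    (hU₂ : U₂ᵀ * U₂ = 1) (hV₂ : V₂ᵀ * V₂ = 1) (hσ₂ : ∀ i, σ₂ i ≠ 0)
    (h₂ : ∀ k₁ i₂ i₃,
      (Matrix.diagonal σ₁ * V₁ᵀ) k₁ (i₂, i₃)
        = (U₂ * Matrix.diagonal σ₂ * V₂ᵀ) (k₁, i₂) i₃) :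
    ∀ i₁ i₂ i₃, x i₁ i₂ i₃
      = ∑ k₁ : Fin r₁, ∑ k₂ : Fin r₂,
          U₁ i₁ k₁ * U₂ (k₁, i₂) k₂ * (Matrix.diagonal σ₂ * V₂ᵀ) k₂ i₃ := by
  intro i₁ i₂ i₃
  rw [h₁, Matrix.mul_assoc, Matrix.mul_apply]
  simp_rw [h₂, Matrix.mul_assoc, Matrix.mul_apply, Finset.mul_sum, mul_assoc]
end
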